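/- Let c, ℓ, γ, D₀ be positive reals and 0 < ε < 1. Define F∞(x) = exp(-x²)/erf(x), G₀(x) = x + (γ(1-ε)√π/(2D₀)) · (1/F∞(x)), and G₂(x) = G₀(x)/F∞(x) for x > 0. Then the equation G₂(x) = D₀c/(ℓ√π) has a unique solution x > 0. -/

import Mathlib

open Real Filter Set Topology

/-- The error function `erf x = (2/√π) ∫₀ˣ exp(-t²) dt`. -/
noncomputable def erf (x : ℝ) : ℝ := (2 / Real.sqrt π) * ∫ t in (0:ℝ)..x, Real.exp (-t ^ 2)

/-! The reciprocal `1 / F∞ x = erf x · exp x²` is continuous, vanishes at `0` and is strictly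
increasing on `[0, ∞)`. Hence, as `A = γ (1 - ε) √π / (2 D₀) ≥ 0`, so is `G₂ = (x + A / F∞) / F∞`,
which moreover tends to `∞`. The intermediate value theorem gives a root of `G₂ x = D₀ c / (ℓ √π)`,
a positive one since the right side is positive, and strict monotonicity makes it unique. -/

lemma intervalIntegrable_exp_neg_sq (a b : ℝ) :
    IntervalIntegrable (fun t => exp (-t ^ 2)) MeasureTheory.volume a b :=
  (by fun_prop : Continuous fun t : ℝ => exp (-t ^ 2)).intervalIntegrable a b

lemma erf_zero : erf 0 = 0 := by simp [erf]

lemma continuous_erf : Continuous erf :=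
  continuous_const.mul (intervalIntegral.continuous_primitive intervalIntegrable_exp_neg_sq 0)

lemma erf_strictMono : StrictMono erf := by
  intro x y hxy
  have hsplit : (∫ t in (0:ℝ)..y, exp (-t ^ 2))
      = (∫ t in (0:ℝ)..x, exp (-t ^ 2)) + ∫ t in x..y, exp (-t ^ 2) :=
    (intervalIntegral.integral_add_adjacent_intervals
      (intervalIntegrable_exp_neg_sq 0 x) (intervalIntegrable_exp_neg_sq x y)).symm
  have hpos : 0 < ∫ t in x..y, exp (-t ^ 2) :=
    intervalIntegral.intervalIntegral_pos_of_pos (intervalIntegrable_exp_neg_sq x y)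
      (fun t => exp_pos _) hxy
  have hconst : (0:ℝ) < 2 / sqrt π := by positivity
  rw [erf, erf, hsplit, mul_add]
  linarith [mul_pos hconst hpos]

lemma erf_nonneg {x : ℝ} (hx : 0 ≤ x) : 0 ≤ erf x :=
  erf_zero ▸ erf_strictMono.monotone hx

noncomputable def erfMulExpSq (x : ℝ) : ℝ := erf x * exp (x ^ 2)

lemma erfMulExpSq_zero : erfMulExpSq 0 = 0 := by simp [erfMulExpSq, erf_zero]

@[fun_prop]
lemma continuous_erfMulExpSq : Continuous erfMulExpSq :=
  continuous_erf.mul (by fun_prop)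

lemma erfMulExpSq_strictMonoOn : StrictMonoOn erfMulExpSq (Ici 0) := by
  intro x hx y hy hxy
  have hexp : exp (x ^ 2) ≤ exp (y ^ 2) :=
    exp_le_exp.2 (pow_le_pow_left₀ hx hxy.le 2)
  exact mul_lt_mul (erf_strictMono hxy) hexp (exp_pos _) (erf_nonneg hy)

lemma one_div_exp_neg_sq_div_erf (x : ℝ) : 1 / (exp (-x ^ 2) / erf x) = erfMulExpSq x := by
  rw [one_div_div, erfMulExpSq, exp_neg, div_inv_eq_mul]

section StrictMonoOnIci

variable {g : ℝ → ℝ}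

lemma StrictMonoOn.nonneg_of_Ici_zero (hg : StrictMonoOn g (Ici 0)) (hg0 : g 0 = 0) {x : ℝ}
    (hx : 0 ≤ x) : 0 ≤ g x :=
  hg0 ▸ hg.monotoneOn self_mem_Ici hx hx

lemma StrictMonoOn.add_mul_self_Ici (hg : StrictMonoOn g (Ici 0)) (hg0 : g 0 = 0) {A : ℝ}
    (hA : 0 ≤ A) : StrictMonoOn (fun x => (x + A * g x) * g x) (Ici 0) := by
  intro x hx y hy hxy
  have hgxy := hg hx hy hxy
  have hgx := hg.nonneg_of_Ici_zero hg0 hx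
  have hfirst : x + A * g x < y + A * g y := by nlinarith
  exact mul_lt_mul'' hfirst hgxy (by nlinarith [hx.out]) hgx

lemma StrictMonoOn.tendsto_add_mul_self_atTop (hg : StrictMonoOn g (Ici 0)) (hg0 : g 0 = 0)
    {A : ℝ} (hA : 0 ≤ A) : Tendsto (fun x => (x + A * g x) * g x) atTop atTop := by
  have hg1 : 0 < g 1 := hg0 ▸ hg self_mem_Ici (mem_Ici.2 zero_le_one) one_pos
  refine tendsto_atTop_mono' atTop ?_ (tendsto_id.atTop_mul_const hg1)
  filter_upwards [eventually_ge_atTop (1:ℝ)] with x hx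
  have hgx : g 1 ≤ g x := hg.monotoneOn (mem_Ici.2 zero_le_one) (mem_Ici.2 (by linarith)) hx
  have hgx0 : 0 ≤ g x := hg1.le.trans hgx
  calc id x * g 1 ≤ x * g x := mul_le_mul_of_nonneg_left hgx (zero_le_one.trans hx)
    _ ≤ (x + A * g x) * g x := by nlinarith [mul_nonneg hA (mul_nonneg hgx0 hgx0)]

end StrictMonoOnIci

lemma existsUnique_pos_eq_of_strictMonoOn_Ici {f : ℝ → ℝ} (hcont : ContinuousOn f (Ici 0))
    (hmono : StrictMonoOn f (Ici 0)) (htop : Tendsto f atTop atTop) {k : ℝ} (hk : f 0 < k) :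
    ∃! x, 0 < x ∧ f x = k := by
  obtain ⟨b, hbk, hb0⟩ := ((htop.eventually_ge_atTop k).and (eventually_ge_atTop 0)).exists
  obtain ⟨x, hx, hfx⟩ := intermediate_value_Icc hb0 (hcont.mono Icc_subset_Ici_self) ⟨hk.le, hbk⟩
  have hx0 : 0 < x := hx.1.lt_of_ne (by rintro rfl; exact hk.ne hfx)
  refine ⟨x, ⟨hx0, hfx⟩, fun y ⟨hy, hfy⟩ => ?_⟩
  exact hmono.injOn (mem_Ici.2 hy.le) (mem_Ici.2 hx0.le) (hfy.trans hfx.symm)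

theorem stmt_12_general (c ℓ γ D₀ ε : ℝ) (hc : 0 < c) (hℓ : 0 < ℓ) (hγ : 0 < γ)
    (hD : 0 < D₀) (hε1 : ε < 1)
    (Finf G₀ G₂ : ℝ → ℝ)
    (hFinf : ∀ x, Finf x = Real.exp (-x ^ 2) / erf x)
    (hG₀ : ∀ x, G₀ x = x + (γ * (1 - ε) * Real.sqrt π / (2 * D₀)) * (1 / Finf x))
    (hG₂ : ∀ x, G₂ x = G₀ x / Finf x) :
    ∃! ξ : ℝ, ξ > 0 ∧ G₂ ξ = D₀ * c / (ℓ * Real.sqrt π) := by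
  set A := γ * (1 - ε) * Real.sqrt π / (2 * D₀)
  have hA : 0 ≤ A := div_nonneg (by have := sub_pos.2 hε1; positivity) (by positivity)
  have hG₂_eq : G₂ = fun x => (x + A * erfMulExpSq x) * erfMulExpSq x := by
    funext x
    rw [hG₂, hG₀, div_eq_mul_one_div, hFinf, one_div_exp_neg_sq_div_erf]
  rw [hG₂_eq]
  refine existsUnique_pos_eq_of_strictMonoOn_Ici (by fun_prop)
    (erfMulExpSq_strictMonoOn.add_mul_self_Ici erfMulExpSq_zero hA)
    (erfMulExpSq_strictMonoOn.tendsto_add_mul_self_atTop erfMulExpSq_zero hA) ?_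
  rw [erfMulExpSq_zero, mul_zero]
  positivity

/-- The equation `G₂(x) = D₀ c/(ℓ√π)` determining the interface coefficient for the
mushy-zone model with prescribed temperature `-D₀` at the fixed face has a unique
positive solution. -/
theorem stmt_12 (c ℓ γ D₀ ε : ℝ) (hc : 0 < c) (hℓ : 0 < ℓ) (hγ : 0 < γ)
    (hD : 0 < D₀) (hε0 : 0 < ε) (hε1 : ε < 1)
    (Finf G₀ G₂ : ℝ → ℝ)
    (hFinf : ∀ x, Finf x = Real.exp (-x ^ 2) / erf x)
    (hG₀ : ∀ x, G₀ x = x + (γ * (1 - ε) * Real.sqrt π / (2 * D₀)) * (1 / Finf x))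
    (hG₂ : ∀ x, G₂ x = G₀ x / Finf x) :
    ∃! ξ : ℝ, ξ > 0 ∧ G₂ ξ = D₀ * c / (ℓ * Real.sqrt π) :=
  stmt_12_general c ℓ γ D₀ ε hc hℓ hγ hD hε1 Finf G₀ G₂ hFinf hG₀ hG₂
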